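/- arXiv:1512.07608 — 2 statements merged into one kernel-verified Lean document; each statement's English description precedes it below -/
import Mathlib

section
/- For every positive integer s, ∑_{k=1}^{s} (-1)^k · P(2s, 2k-1) · ζ_E(2k)/(2^{2k} π^{2k}) = (2s+1-2^{2s})/((2s+1)·2^{2s+1}), where P(n, r) = n!/(n-r)! and ζ_E is the Euler zeta function. -/
/-!
Fourier expansion of the Bernoulli polynomials at `x = 1/2` gives
`η(2k) = (-1)^k (2π)^(2k) B_{2k}(1/2) / (2 (2k)!)`, so the `k`-th summand equals
`P(2s, 2k-1) B_{2k}(1/2) / (2 (2k)!) = C(2s+1, 2k) B_{2k}(1/2) / (2 (2s+1))`.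
The sum of these is read off from `∑_j C(2s+1, j) B_j(x) = (2s+1) x^(2s)` at `x = 1/2`, where the
odd-index terms vanish by the symmetry `B_j(1 - x) = (-1)^j B_j(x)`.
-/

open Real

noncomputable def eulerZeta (s : ℕ) : ℝ := ∑' n : ℕ, (-1 : ℝ) ^ ((n + 1) - 1) / (n + 1 : ℝ) ^ s

open scoped Nat
open Finset Polynomial

theorem Nat.succ_mul_descFactorial_eq_factorial_mul_choose (n k : ℕ) :
    (n + 1) * n.descFactorial k = (k + 1)! * (n + 1).choose (k + 1) := by
  rw [← Nat.succ_descFactorial_succ, Nat.descFactorial_eq_factorial_mul_choose]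

theorem Finset.sum_range_two_mul_add_one_of_odd_eq_zero {M : Type*} [AddCommMonoid M]
    (f : ℕ → M) (hf : ∀ j, Odd j → f j = 0) (n : ℕ) :
    ∑ j ∈ range (2 * n + 1), f j = ∑ k ∈ range (n + 1), f (2 * k) := by
  induction n with
  | zero => simp
  | succ n ih =>
    rw [show 2 * (n + 1) + 1 = 2 * n + 1 + 1 + 1 by ring, sum_range_succ, sum_range_succ, ih,
      hf _ (odd_two_mul_add_one n), add_zero, sum_range_succ (n := n + 1)]
    rfl

theorem Polynomial.bernoulli_eval_one_half_of_odd {n : ℕ} (hn : Odd n) :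
    (Polynomial.bernoulli n).eval (1 / 2 : ℚ) = 0 := by
  have h := bernoulli_eval_one_sub n (1 / 2)
  rw [hn.neg_one_pow] at h
  norm_num at h
  linarith

theorem Polynomial.sum_choose_mul_bernoulli_two_mul_eval_one_half (s : ℕ) :
    ∑ k ∈ Icc 1 s, ((2 * s + 1).choose (2 * k) : ℚ) * (Polynomial.bernoulli (2 * k)).eval (1 / 2)
      = (2 * s + 1) * (1 / 2) ^ (2 * s) - 1 := by
  have h := congrArg (eval (1 / 2 : ℚ)) (sum_bernoulli (2 * s))
  simp only [eval_finsetSum, eval_smul, smul_eq_mul, eval_monomial] at h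
  rw [sum_range_two_mul_add_one_of_odd_eq_zero _
      (fun j hj => by rw [bernoulli_eval_one_half_of_odd hj, mul_zero]),
    Nat.range_succ_eq_Icc_zero, ← insert_Icc_add_one_left_eq_Icc s.zero_le,
    sum_insert (by simp)] at h
  simp only [mul_zero, Nat.choose_zero_right, Nat.cast_one, Polynomial.bernoulli_zero, eval_one,
    one_mul] at h
  push_cast at h
  linarith

theorem sum_descFactorial_mul_bernoulli_two_mul_eval_one_half (s : ℕ) :
    ∑ k ∈ Icc 1 s, ((2 * s).descFactorial (2 * k - 1) : ℚ) *
        (Polynomial.bernoulli (2 * k)).eval (1 / 2) / (2 * (2 * k)!)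
      = (2 * s + 1 - 2 ^ (2 * s)) / ((2 * s + 1) * 2 ^ (2 * s + 1)) := by
  have hterm : ∀ k ∈ Icc 1 s, ((2 * s).descFactorial (2 * k - 1) : ℚ) *
        (Polynomial.bernoulli (2 * k)).eval (1 / 2) / (2 * (2 * k)!)
      = ((2 * s + 1).choose (2 * k) : ℚ) * (Polynomial.bernoulli (2 * k)).eval (1 / 2)
        / (2 * (2 * s + 1)) := by
    intro k hk
    have hk' : 2 * k - 1 + 1 = 2 * k := by grind
    have h := Nat.succ_mul_descFactorial_eq_factorial_mul_choose (2 * s) (2 * k - 1)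
    rw [hk'] at h
    have hq : (2 * s + 1 : ℚ) * (2 * s).descFactorial (2 * k - 1)
        = (2 * k)! * (2 * s + 1).choose (2 * k) := by exact_mod_cast h
    field_simp
    linear_combination (Polynomial.bernoulli (2 * k)).eval (1 / 2 : ℚ) * hq
  rw [sum_congr rfl hterm, ← sum_div, sum_choose_mul_bernoulli_two_mul_eval_one_half, one_div_pow]
  field_simp
  ring

theorem eulerZeta_two_mul {k : ℕ} (hk : k ≠ 0) :
    eulerZeta (2 * k) = (-1) ^ k * (2 * π) ^ (2 * k) / (2 * (2 * k)!) *
      (((Polynomial.bernoulli (2 * k)).eval (1 / 2) : ℚ) : ℝ) := by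
  have hcos := (hasSum_nat_add_iff' 1).mpr
    (hasSum_one_div_nat_pow_mul_cos hk (x := 1 / 2) (by norm_num))
  have hterm : ∀ n : ℕ, 1 / ((n + 1 : ℕ) : ℝ) ^ (2 * k) * cos (2 * π * (n + 1 : ℕ) * (1 / 2))
      = -((-1) ^ ((n + 1) - 1) / (n + 1 : ℝ) ^ (2 * k)) := by
    intro n
    rw [show 2 * π * ((n + 1 : ℕ) : ℝ) * (1 / 2) = (n + 1 : ℕ) * π by ring, cos_nat_mul_pi,
      Nat.add_sub_cancel, pow_succ]
    push_cast
    ring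
  have hB : (Polynomial.map (algebraMap ℚ ℝ) (Polynomial.bernoulli (2 * k))).eval (1 / 2)
      = (((Polynomial.bernoulli (2 * k)).eval (1 / 2) : ℚ) : ℝ) := by
    rw [show (1 / 2 : ℝ) = ((1 / 2 : ℚ) : ℝ) by norm_num, ← eq_ratCast (algebraMap ℚ ℝ),
      eval_map_apply, eq_ratCast]
  -- the dropped `n = 0` term of the cosine series is `1 / 0 ^ (2k) = 0`
  simp only [hterm, sum_range_one, Nat.cast_zero, zero_pow (by omega : 2 * k ≠ 0), div_zero,
    zero_mul, sub_zero, hB] at hcos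
  rw [eulerZeta, ← neg_neg (∑' n : ℕ, _), ← tsum_neg, hcos.tsum_eq, pow_succ]
  field_simp

theorem recurrence_sum2_general (s : ℕ) :
    ∑ k ∈ Finset.Icc 1 s,
      (-1 : ℝ) ^ k * ((2 * s).descFactorial (2 * k - 1) : ℝ) * eulerZeta (2 * k)
        / (2 ^ (2 * k) * π ^ (2 * k))
      = (2 * (s : ℝ) + 1 - 2 ^ (2 * s)) / ((2 * (s : ℝ) + 1) * 2 ^ (2 * s + 1)) := by
  have hterm : ∀ k ∈ Icc 1 s,
      (-1 : ℝ) ^ k * ((2 * s).descFactorial (2 * k - 1) : ℝ) * eulerZeta (2 * k)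
        / (2 ^ (2 * k) * π ^ (2 * k))
      = ((((2 * s).descFactorial (2 * k - 1) : ℚ) *
          (Polynomial.bernoulli (2 * k)).eval (1 / 2) / (2 * (2 * k)!) : ℚ) : ℝ) := by
    intro k hk
    have hsq : ((-1 : ℝ) ^ k) ^ 2 = 1 := by rw [pow_right_comm]; norm_num
    rw [eulerZeta_two_mul (by grind), mul_pow]
    push_cast
    field_simp
    rw [hsq, one_mul]
  rw [sum_congr rfl hterm, ← Rat.cast_sum, sum_descFactorial_mul_bernoulli_two_mul_eval_one_half]
  push_cast
  rfl

theorem recurrence_sum2 (s : ℕ) (hs : 0 < s) :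
    ∑ k ∈ Finset.Icc 1 s,
      (-1 : ℝ) ^ k * ((2 * s).descFactorial (2 * k - 1) : ℝ) * eulerZeta (2 * k)
        / (2 ^ (2 * k) * π ^ (2 * k))
      = (2 * (s : ℝ) + 1 - 2 ^ (2 * s)) / ((2 * (s : ℝ) + 1) * 2 ^ (2 * s + 1)) :=
  recurrence_sum2_general s
end

section
/- For every positive integer m, ∑_{n=1}^∞ ∑_{k=1}^{m} (-1)^{k+1} P(2m, 2k-1) · 2^{2m+1} · (-1)^n/(n^{2k} π^{2k}) = −2^{2m}/(2m+1), where P(n,r) = n!/(n-r)!. -/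
/-! Summing over `n` first, the `k`-th series is the cosine Fourier series of the Bernoulli
polynomial `B_{2k}` at `1/2`: `∑ (-1)^n / n^{2k} = (-1)^{k+1} (2π)^{2k} B_{2k}(1/2) / (2 (2k)!)`.
As `P(2m, 2k-1) / (2k)! = C(2m+1, 2k) / (2m+1)`, the claim becomes
`∑_{k=1}^m C(2m+1, 2k) 2^{2k} B_{2k}(1/2) = -1`. By `B_j(1/2) = (2^{1-j} - 1) B_j`, the full sum
`∑_{j=0}^{2m+1} C(2m+1, j) 2^j B_j(1/2)` equals `2 B_{2m+1}(1) - 2^{2m+1} B_{2m+1}(1/2) = 0`;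
its odd-index terms vanish and its `j = 0` term is `1`. -/

open Real Finset
open scoped Nat

theorem Finset.sum_range_two_mul_eq_sum_even {M : Type*} [AddCommMonoid M] (f : ℕ → M)
    (hf : ∀ i, f (2 * i + 1) = 0) (n : ℕ) :
    ∑ j ∈ range (2 * n), f j = ∑ i ∈ range n, f (2 * i) := by
  induction n with
  | zero => simp
  | succ n ih => rw [Nat.mul_succ, sum_range_succ, sum_range_succ, hf, add_zero, ih, sum_range_succ]

theorem Nat.succ_mul_descFactorial_eq_choose_mul_factorial (n r : ℕ) :
    (n + 1) * n.descFactorial r = (n + 1).choose (r + 1) * (r + 1)! := by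
  rw [← Nat.succ_descFactorial_succ, Nat.descFactorial_eq_factorial_mul_choose, mul_comm]

theorem bernoulliFun_eq_sum (n : ℕ) (x : ℝ) :
    bernoulliFun n x = ∑ j ∈ range (n + 1), (n.choose j : ℝ) * bernoulli j * x ^ (n - j) := by
  simp [bernoulliFun, Polynomial.bernoulli, mul_comm]

theorem two_pow_mul_bernoulliFun_half (n : ℕ) :
    2 ^ n * bernoulliFun n 2⁻¹ = ∑ j ∈ range (n + 1), (n.choose j : ℝ) * 2 ^ j * bernoulli j := by
  rw [bernoulliFun_eq_sum, mul_sum]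
  refine sum_congr rfl fun j hj => ?_
  rw [inv_pow, pow_sub₀ _ two_ne_zero (Nat.lt_succ_iff.mp (mem_range.mp hj))]
  field_simp

theorem sum_choose_mul_two_pow_mul_bernoulliFun_half (n : ℕ) :
    ∑ j ∈ range (n + 1), (n.choose j : ℝ) * 2 ^ j * bernoulliFun j 2⁻¹ =
      2 * bernoulliFun n 1 - 2 ^ n * bernoulliFun n 2⁻¹ := by
  have h2 : ∀ j : ℕ, (2 : ℝ) ^ j * bernoulliFun j 2⁻¹ = (2 - 2 ^ j) * bernoulli j := fun j => by
    rw [bernoulliFun_eval_half]; field_simp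
  rw [two_pow_mul_bernoulliFun_half, bernoulliFun_eq_sum, mul_sum, ← sum_sub_distrib]
  refine sum_congr rfl fun j _ => ?_
  rw [mul_assoc, h2, one_pow]
  ring

theorem sum_choose_two_mul_mul_two_pow_mul_bernoulliFun_half {m : ℕ} (hm : 0 < m) :
    ∑ k ∈ Icc 1 m, ((2 * m + 1).choose (2 * k) : ℝ) * 2 ^ (2 * k) * bernoulliFun (2 * k) 2⁻¹
      = -1 := by
  set f : ℕ → ℝ := fun j => (2 * m + 1).choose j * 2 ^ j * bernoulliFun j 2⁻¹
  have hodd : ∀ i, f (2 * i + 1) = 0 := fun i => by simp [f, bernoulliFun_eval_half_eq_zero]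
  have hfull : ∑ j ∈ range (2 * (m + 1)), f j = 0 := by
    have hlt : 1 < 2 * m + 1 := by omega
    rw [show 2 * (m + 1) = 2 * m + 1 + 1 by ring, sum_choose_mul_two_pow_mul_bernoulliFun_half,
      bernoulliFun_eval_one, bernoulliFun_eval_zero,
      bernoulli_eq_zero_of_odd (odd_two_mul_add_one m) hlt, bernoulliFun_eval_half_eq_zero]
    simp [hm.ne']
  rw [sum_range_two_mul_eq_sum_even f hodd, Nat.range_succ_eq_Icc_zero, Icc_eq_cons_Ioc m.zero_le,
    sum_cons, ← Icc_add_one_left_eq_Ioc] at hfull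
  simp only [f, mul_zero, pow_zero, Nat.choose_zero_right, bernoulliFun_zero, zero_add] at hfull
  linarith

theorem hasSum_neg_one_pow_succ_div_succ_pow {k : ℕ} (hk : k ≠ 0) :
    HasSum (fun n : ℕ => (-1 : ℝ) ^ (n + 1) / ((n : ℝ) + 1) ^ (2 * k))
      ((-1) ^ (k + 1) * (2 * π) ^ (2 * k) / 2 / (2 * k)! * bernoulliFun (2 * k) 2⁻¹) := by
  have h := (hasSum_nat_add_iff' 1).mpr
    (hasSum_one_div_nat_pow_mul_cos hk (x := 2⁻¹) (by norm_num))
  rw [sum_range_one, Nat.cast_zero, zero_pow (by omega), div_zero, zero_mul, sub_zero] at h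
  have hcos : ∀ n : ℕ, 1 / ((n + 1 : ℕ) : ℝ) ^ (2 * k) * cos (2 * π * (n + 1 : ℕ) * 2⁻¹) =
      (-1) ^ (n + 1) / ((n : ℝ) + 1) ^ (2 * k) := fun n => by
    rw [show 2 * π * ((n + 1 : ℕ) : ℝ) * 2⁻¹ = (n + 1 : ℕ) * π by ring, Real.cos_nat_mul_pi]
    push_cast
    ring
  simp only [hcos] at h
  exact h

theorem hasSum_descFactorial_mul_neg_one_pow_div (m : ℕ) {k : ℕ} (hk : k ≠ 0) :
    HasSum (fun n : ℕ => (-1 : ℝ) ^ (k + 1) * ((2 * m).descFactorial (2 * k - 1) : ℝ) *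
        2 ^ (2 * m + 1) * ((-1 : ℝ) ^ (n + 1) / (((n : ℝ) + 1) ^ (2 * k) * π ^ (2 * k))))
      (2 ^ (2 * m) / (2 * m + 1) *
        ((2 * m + 1).choose (2 * k) * 2 ^ (2 * k) * bernoulliFun (2 * k) 2⁻¹)) := by
  have hP : (2 * m + 1 : ℝ) * (2 * m).descFactorial (2 * k - 1) =
      (2 * m + 1).choose (2 * k) * (2 * k)! := by
    have h := Nat.succ_mul_descFactorial_eq_choose_mul_factorial (2 * m) (2 * k - 1)
    rw [Nat.sub_add_cancel (by omega)] at h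
    exact_mod_cast h
  have hsq : ((-1 : ℝ) ^ (k + 1)) ^ 2 = 1 := by
    rw [← pow_mul, mul_comm, (even_two_mul _).neg_one_pow]
  convert (preTransparency := .instances) (((hasSum_neg_one_pow_succ_div_succ_pow hk).div_const
    (π ^ (2 * k))).mul_left ((-1 : ℝ) ^ (k + 1) * ((2 * m).descFactorial (2 * k - 1) : ℝ) *
      2 ^ (2 * m + 1))) using 1
  · simp only [div_div]
  rw [mul_pow]
  field_simp
  linear_combination (-2 ^ (2 * m + 1) * bernoulliFun (2 * k) (1 / 2)) * hP -
    (2 ^ (2 * m + 1) * bernoulliFun (2 * k) (1 / 2) * (2 * m + 1) *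
      (2 * m).descFactorial (2 * k - 1)) * hsq

theorem fourier_at_zero (m : ℕ) (hm : 0 < m) :
    ∑' n : ℕ,
        ∑ k ∈ Finset.Icc 1 m,
          (-1 : ℝ) ^ (k + 1) * ((2 * m).descFactorial (2 * k - 1) : ℝ) * 2 ^ (2 * m + 1) *
            ((-1 : ℝ) ^ (n + 1) / (((n : ℝ) + 1) ^ (2 * k) * π ^ (2 * k)))
      = -(2 ^ (2 * m)) / (2 * (m : ℝ) + 1) := by
  have hterm := fun k (hk : k ∈ Icc 1 m) =>
    hasSum_descFactorial_mul_neg_one_pow_div m (Nat.one_le_iff_ne_zero.1 (mem_Icc.1 hk).1)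
  rw [(hasSum_sum hterm).tsum_eq, ← mul_sum,
    sum_choose_two_mul_mul_two_pow_mul_bernoulliFun_half hm]
  ring
end
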